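/- arXiv:2311.05395 — 6 statements merged into one kernel-verified Lean document; each statement's English description precedes it below -/
import Mathlib

section
/- Continuous energy estimate with weakly enforceable Robin/Neumann boundary conditions: for every t ∈ [0,T], ∫₀¹ u(x,t)² dx + 2 ∫₀ᵗ ∫₀¹ ε(x,s)·(∂ₓu(x,s))² dx ds ≤ ∫₀¹ u(x,0)² dx; in particular the L² norm of the solution at time t is bounded by that of the initial data. -/
/-!
Multiplying the equation by `2u` and integrating by parts in `x`, the convective and diffusive
fluxes leave the boundary term `[2 u ε uₓ - a u²]₀¹ = -a u(1,t)² - a u(0,t)² ≤ 0` under the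
Robin and Neumann conditions, so `∫₀¹ 2 u uₜ dx ≤ -2 ∫₀¹ ε uₓ² dx` at every time. Integrating this
in time (the fundamental theorem of calculus in `t` for each `x`, then Fubini on the rectangle)
gives the estimate.
-/

open MeasureTheory Set intervalIntegral

theorem ContinuousOn.comp_prodMk_left {f : ℝ × ℝ → ℝ} {s t : Set ℝ}
    (hf : ContinuousOn f (s ×ˢ t)) {y : ℝ} (hy : y ∈ t) : ContinuousOn (fun x => f (x, y)) s :=
  hf.comp (Continuous.prodMk_left y).continuousOn fun _ hx => ⟨hx, hy⟩

theorem ContinuousOn.comp_prodMk_right {f : ℝ × ℝ → ℝ} {s t : Set ℝ}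
    (hf : ContinuousOn f (s ×ˢ t)) {x : ℝ} (hx : x ∈ s) : ContinuousOn (fun y => f (x, y)) t :=
  hf.comp (Continuous.prodMk_right x).continuousOn fun _ hy => ⟨hx, hy⟩

theorem continuousOn_intervalIntegral_of_continuousOn_prod {f : ℝ × ℝ → ℝ} {a b c d : ℝ}
    (hab : a ≤ b) (hcd : c ≤ d) (hf : ContinuousOn f (Icc a b ×ˢ Icc c d)) :
    ContinuousOn (fun y => ∫ x in a..b, f (x, y)) (Icc c d) := by
  -- Clamping both coordinates into the rectangle extends `f` to a continuous function on the plane.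
  set g : ℝ × ℝ → ℝ := fun p => f (projIcc a b hab p.1, projIcc c d hcd p.2)
  have hg : Continuous g := hf.comp_continuous (by fun_prop)
    fun p => ⟨(projIcc a b hab p.1).2, (projIcc c d hcd p.2).2⟩
  refine (continuous_parametric_intervalIntegral_of_continuous' (f := fun y x => g (x, y))
    (hg.comp continuous_swap) a b).continuousOn.congr fun y hy => integral_congr fun x hx => ?_
  rw [uIcc_of_le hab] at hx
  simp [g, projIcc_of_mem hab hx, projIcc_of_mem hcd hy]

theorem integral_integral_swap_of_continuousOn {f : ℝ × ℝ → ℝ} {a b c d : ℝ}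
    (hab : a ≤ b) (hcd : c ≤ d) (hf : ContinuousOn f (Icc a b ×ˢ Icc c d)) :
    ∫ x in a..b, ∫ y in c..d, f (x, y) = ∫ y in c..d, ∫ x in a..b, f (x, y) := by
  have hint : Integrable f ((volume.restrict (Ioc a b)).prod (volume.restrict (Ioc c d))) := by
    rw [Measure.prod_restrict]
    exact (hf.integrableOn_compact (isCompact_Icc.prod isCompact_Icc)).mono_set
      (prod_mono Ioc_subset_Icc_self Ioc_subset_Icc_self)
  simp only [integral_of_le hab, integral_of_le hcd]
  exact integral_integral_swap hint

theorem integral_sub_integral_eq_integral_integral_of_hasDerivAt {f f' : ℝ × ℝ → ℝ}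
    {a b c d : ℝ} (hab : a ≤ b) (hcd : c ≤ d) (hf : ContinuousOn f (Icc a b ×ˢ Icc c d))
    (hf' : ContinuousOn f' (Icc a b ×ˢ Icc c d))
    (hderiv : ∀ q ∈ Icc a b ×ˢ Icc c d, HasDerivAt (fun τ => f (q.1, τ)) (f' q) q.2) :
    (∫ x in a..b, f (x, d)) - ∫ x in a..b, f (x, c) = ∫ τ in c..d, ∫ x in a..b, f' (x, τ) := by
  have hslice (y : ℝ) (hy : y ∈ Icc c d) : IntervalIntegrable (fun x => f (x, y)) volume a b :=
    (hf.comp_prodMk_left hy).intervalIntegrable_of_Icc hab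
  rw [← integral_sub (hslice d (right_mem_Icc.2 hcd)) (hslice c (left_mem_Icc.2 hcd)),
    ← integral_integral_swap_of_continuousOn hab hcd hf']
  refine integral_congr fun x hx => ?_
  rw [uIcc_of_le hab] at hx
  refine (integral_eq_sub_of_hasDerivAt (f := fun τ => f (x, τ)) (fun τ hτ => ?_)
    ((hf'.comp_prodMk_right hx).intervalIntegrable_of_Icc hcd)).symm
  rw [uIcc_of_le hcd] at hτ
  exact hderiv (x, τ) ⟨hx, hτ⟩

theorem integral_mul_flux_sub_le_of_robin_of_neumann {l r a : ℝ} (ha : 0 ≤ a)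
    {v v' F F' : ℝ → ℝ} (hv : ∀ x ∈ uIcc l r, HasDerivAt v (v' x) x)
    (hF : ∀ x ∈ uIcc l r, HasDerivAt F (F' x) x) (hv' : ContinuousOn v' (uIcc l r))
    (hF' : ContinuousOn F' (uIcc l r)) (hl : F l = a * v l) (hr : F r = 0) :
    ∫ x in l..r, 2 * v x * (F' x - a * v' x) ≤ -2 * ∫ x in l..r, v' x * F x := by
  have hvc : ContinuousOn v (uIcc l r) := fun x hx => (hv x hx).continuousAt.continuousWithinAt
  have hparts := integral_mul_deriv_eq_deriv_mul hv hF hv'.intervalIntegrable hF'.intervalIntegrable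
  have hsq : ∫ x in l..r, 2 * v x * v' x = v r ^ 2 - v l ^ 2 :=
    integral_eq_sub_of_hasDerivAt (fun x hx => by simpa using (hv x hx).pow 2)
      ((hvc.const_mul 2).mul hv').intervalIntegrable
  calc ∫ x in l..r, 2 * v x * (F' x - a * v' x)
      = 2 * (∫ x in l..r, v x * F' x) - a * ∫ x in l..r, 2 * v x * v' x := by
        rw [← intervalIntegral.integral_const_mul, ← intervalIntegral.integral_const_mul,
          ← intervalIntegral.integral_sub]
        · exact integral_congr fun x _ => by ring
        · exact ((hvc.mul hF').const_mul 2).intervalIntegrable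
        · exact (((hvc.const_mul 2).mul hv').const_mul a).intervalIntegrable
    _ = -2 * (∫ x in l..r, v' x * F x) - a * (v l ^ 2 + v r ^ 2) := by
        rw [hparts, hsq, hl, hr]; ring
    _ ≤ -2 * ∫ x in l..r, v' x * F x := by
        have : 0 ≤ a * (v l ^ 2 + v r ^ 2) := by positivity
        linarith

noncomputable def partialFst (f : ℝ × ℝ → ℝ) (q : ℝ × ℝ) : ℝ := deriv (fun y => f (y, q.2)) q.1

noncomputable def partialSnd (f : ℝ × ℝ → ℝ) (q : ℝ × ℝ) : ℝ := deriv (fun τ => f (q.1, τ)) q.2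

section PartialDerivatives

variable {f : ℝ × ℝ → ℝ} {q : ℝ × ℝ}

theorem DifferentiableAt.hasDerivAt_partialFst (hf : DifferentiableAt ℝ f q) :
    HasDerivAt (fun y => f (y, q.2)) (partialFst f q) q.1 :=
  (hf.comp q.1 (differentiableAt_id.prodMk (differentiableAt_const q.2))).hasDerivAt

theorem DifferentiableAt.hasDerivAt_partialSnd (hf : DifferentiableAt ℝ f q) :
    HasDerivAt (fun τ => f (q.1, τ)) (partialSnd f q) q.2 :=
  (hf.comp q.2 ((differentiableAt_const q.1).prodMk differentiableAt_id)).hasDerivAt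

theorem DifferentiableAt.partialFst_eq_fderiv (hf : DifferentiableAt ℝ f q) :
    partialFst f q = fderiv ℝ f q (1, 0) :=
  (hf.hasFDerivAt.comp_hasDerivAt q.1 ((hasDerivAt_id q.1).prodMk (hasDerivAt_const q.1 q.2))).deriv

theorem DifferentiableAt.partialSnd_eq_fderiv (hf : DifferentiableAt ℝ f q) :
    partialSnd f q = fderiv ℝ f q (0, 1) :=
  (hf.hasFDerivAt.comp_hasDerivAt q.2 ((hasDerivAt_const q.2 q.1).prodMk (hasDerivAt_id q.2))).deriv

variable {s : Set (ℝ × ℝ)} {m n : WithTop ℕ∞}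

theorem ContDiffOn.partialFst (hf : ContDiffOn ℝ n f s) (hs : IsOpen s) (hmn : m + 1 ≤ n) :
    ContDiffOn ℝ m (partialFst f) s :=
  ((hf.fderiv_of_isOpen hs hmn).clm_apply contDiffOn_const).congr fun _ hq =>
    ((hf.contDiffAt (hs.mem_nhds hq)).differentiableAt
      (zero_lt_one.trans_le (le_add_self.trans hmn)).ne').partialFst_eq_fderiv

theorem ContDiffOn.partialSnd (hf : ContDiffOn ℝ n f s) (hs : IsOpen s) (hmn : m + 1 ≤ n) :
    ContDiffOn ℝ m (partialSnd f) s :=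
  ((hf.fderiv_of_isOpen hs hmn).clm_apply contDiffOn_const).congr fun _ hq =>
    ((hf.contDiffAt (hs.mem_nhds hq)).differentiableAt
      (zero_lt_one.trans_le (le_add_self.trans hmn)).ne').partialSnd_eq_fderiv

end PartialDerivatives

theorem integral_sq_add_two_mul_integral_dissipation_le {a t : ℝ} (ha : 0 ≤ a) (ht : 0 ≤ t)
    {u ε ut ux fluxx : ℝ × ℝ → ℝ}
    (hu : ContinuousOn u (Icc 0 1 ×ˢ Icc 0 t)) (hε : ContinuousOn ε (Icc 0 1 ×ˢ Icc 0 t))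
    (hut : ContinuousOn ut (Icc 0 1 ×ˢ Icc 0 t)) (hux : ContinuousOn ux (Icc 0 1 ×ˢ Icc 0 t))
    (hfluxx : ContinuousOn fluxx (Icc 0 1 ×ˢ Icc 0 t))
    (hu_t : ∀ q ∈ Icc 0 1 ×ˢ Icc 0 t, HasDerivAt (fun τ => u (q.1, τ)) (ut q) q.2)
    (hu_x : ∀ q ∈ Icc 0 1 ×ˢ Icc 0 t, HasDerivAt (fun y => u (y, q.2)) (ux q) q.1)
    (hflux_x : ∀ q ∈ Icc 0 1 ×ˢ Icc 0 t,
      HasDerivAt (fun y => ε (y, q.2) * ux (y, q.2)) (fluxx q) q.1)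
    (hpde : ∀ q ∈ Icc 0 1 ×ˢ Icc 0 t, ut q + a * ux q = fluxx q)
    (hrobin : ∀ τ ∈ Icc 0 t, a * u (0, τ) - ε (0, τ) * ux (0, τ) = 0)
    (hneumann : ∀ τ ∈ Icc 0 t, ε (1, τ) * ux (1, τ) = 0) :
    (∫ x in (0:ℝ)..1, u (x, t) ^ 2)
        + 2 * ∫ τ in (0:ℝ)..t, ∫ x in (0:ℝ)..1, ε (x, τ) * ux (x, τ) ^ 2
      ≤ ∫ x in (0:ℝ)..1, u (x, 0) ^ 2 := by
  have hrate : ∀ τ ∈ Icc 0 t, ∫ x in (0:ℝ)..1, 2 * u (x, τ) * ut (x, τ)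
      ≤ -2 * ∫ x in (0:ℝ)..1, ε (x, τ) * ux (x, τ) ^ 2 := by
    intro τ hτ
    have hunit : uIcc (0:ℝ) 1 = Icc 0 1 := uIcc_of_le zero_le_one
    have hmem : ∀ x ∈ uIcc (0:ℝ) 1, (x, τ) ∈ Icc 0 1 ×ˢ Icc 0 t := fun x hx => ⟨hunit ▸ hx, hτ⟩
    have h := integral_mul_flux_sub_le_of_robin_of_neumann ha (v := fun x => u (x, τ))
      (F := fun x => ε (x, τ) * ux (x, τ))
      (fun x hx => hu_x _ (hmem x hx)) (fun x hx => hflux_x _ (hmem x hx))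
      (hunit ▸ hux.comp_prodMk_left hτ) (hunit ▸ hfluxx.comp_prodMk_left hτ)
      (by linarith [hrobin τ hτ]) (hneumann τ hτ)
    convert h using 1
    · refine integral_congr fun x hx => ?_
      simp only [← hpde _ (hmem x hx)]
      ring
    · congr 1
      exact integral_congr fun x _ => by ring
  have henergy := integral_sub_integral_eq_integral_integral_of_hasDerivAt zero_le_one ht
    (f := fun q => u q ^ 2) (f' := fun q => 2 * u q * ut q) (hu.pow 2) ((hu.const_mul 2).mul hut)
    fun q hq => ((hu_t q hq).fun_pow 2).congr_deriv (by simp)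
  have hdecay : ∫ τ in (0:ℝ)..t, ∫ x in (0:ℝ)..1, 2 * u (x, τ) * ut (x, τ)
      ≤ ∫ τ in (0:ℝ)..t, -2 * ∫ x in (0:ℝ)..1, ε (x, τ) * ux (x, τ) ^ 2 := integral_mono_on ht
    ((continuousOn_intervalIntegral_of_continuousOn_prod zero_le_one ht
      ((hu.const_mul 2).mul hut)).intervalIntegrable_of_Icc ht)
    (((continuousOn_intervalIntegral_of_continuousOn_prod zero_le_one ht
      (hε.mul (hux.pow 2))).const_mul (-2)).intervalIntegrable_of_Icc ht) hrate
  rw [intervalIntegral.integral_const_mul] at hdecay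
  linarith

theorem stmt1_general (a T : ℝ) (ha : 0 ≤ a) (u ε : ℝ × ℝ → ℝ) (s : Set (ℝ × ℝ))
    (hs : IsOpen s) (hsub : Set.Icc (0:ℝ) 1 ×ˢ Set.Icc (0:ℝ) T ⊆ s)
    (hu : ContDiffOn ℝ 2 u s) (hε : ContDiffOn ℝ 1 ε s)
    (hpde : ∀ x ∈ Set.Icc (0:ℝ) 1, ∀ t ∈ Set.Icc (0:ℝ) T,
      deriv (fun τ => u (x, τ)) t + a * deriv (fun y => u (y, t)) x
        = deriv (fun y => ε (y, t) * deriv (fun z => u (z, t)) y) x)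
    (hrobin : ∀ t ∈ Set.Icc (0:ℝ) T,
      a * u (0, t) - ε (0, t) * deriv (fun y => u (y, t)) 0 = 0)
    (hneumann : ∀ t ∈ Set.Icc (0:ℝ) T,
      ε (1, t) * deriv (fun y => u (y, t)) 1 = 0) :
    ∀ t ∈ Set.Icc (0:ℝ) T,
      (∫ x in (0:ℝ)..1, (u (x, t))^2)
        + 2 * ∫ τ in (0:ℝ)..t, (∫ x in (0:ℝ)..1, ε (x, τ) * (deriv (fun y => u (y, τ)) x)^2)
      ≤ ∫ x in (0:ℝ)..1, (u (x, 0))^2 := by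
  intro t ht
  have hIcc : Icc 0 t ⊆ Icc 0 T := Icc_subset_Icc le_rfl ht.2
  have hR : Icc 0 1 ×ˢ Icc 0 t ⊆ s := (prod_mono le_rfl hIcc).trans hsub
  have hux : ContDiffOn ℝ 1 (partialFst u) s := hu.partialFst hs (by norm_num)
  have hflux : ContDiffOn ℝ 1 (fun q => ε q * partialFst u q) s := hε.mul hux
  have hdiff {f : ℝ × ℝ → ℝ} (hf : ContDiffOn ℝ 1 f s) {q} (hq : q ∈ Icc 0 1 ×ˢ Icc 0 t) :
      DifferentiableAt ℝ f q :=
    (hf.contDiffAt (hs.mem_nhds (hR hq))).differentiableAt one_ne_zero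
  have hestimate := integral_sq_add_two_mul_integral_dissipation_le ha ht.1
    (hu.continuousOn.mono hR) (hε.continuousOn.mono hR)
    ((hu.partialSnd hs (m := 0) (by norm_num)).continuousOn.mono hR) (hux.continuousOn.mono hR)
    ((hflux.partialFst hs (m := 0) (by norm_num)).continuousOn.mono hR)
    (fun q hq => (hdiff (hu.of_le (by norm_num)) hq).hasDerivAt_partialSnd)
    (fun q hq => (hdiff (hu.of_le (by norm_num)) hq).hasDerivAt_partialFst)
    (fun q hq => (hdiff hflux hq).hasDerivAt_partialFst)
    (fun q hq => hpde q.1 hq.1 q.2 (hIcc hq.2))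
    (fun τ hτ => hrobin τ (hIcc hτ)) (fun τ hτ => hneumann τ (hIcc hτ))
  exact hestimate

/-- Continuous energy estimate for the 1D advection–diffusion equation
`uₜ + a uₓ = (ε uₓ)ₓ` on `[0,1] × [0,T]` with homogeneous Robin inflow condition
`a u(0,t) − ε(0,t) uₓ(0,t) = 0` and homogeneous Neumann outflow condition
`ε(1,t) uₓ(1,t) = 0`: for every `t ∈ [0,T]`,
`∫₀¹ u(x,t)² dx + 2 ∫₀ᵗ ∫₀¹ ε uₓ² dx ds ≤ ∫₀¹ u(x,0)² dx`. -/
theorem stmt1 (a T : ℝ) (ha : 0 ≤ a) (hT : 0 < T) (u ε : ℝ × ℝ → ℝ) (s : Set (ℝ × ℝ))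
    (hs : IsOpen s) (hsub : Set.Icc (0:ℝ) 1 ×ˢ Set.Icc (0:ℝ) T ⊆ s)
    (hu : ContDiffOn ℝ 2 u s) (hε : ContDiffOn ℝ 1 ε s)
    (hεnn : ∀ q ∈ Set.Icc (0:ℝ) 1 ×ˢ Set.Icc (0:ℝ) T, 0 ≤ ε q)
    (hpde : ∀ x ∈ Set.Icc (0:ℝ) 1, ∀ t ∈ Set.Icc (0:ℝ) T,
      deriv (fun τ => u (x, τ)) t + a * deriv (fun y => u (y, t)) x
        = deriv (fun y => ε (y, t) * deriv (fun z => u (z, t)) y) x)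
    (hrobin : ∀ t ∈ Set.Icc (0:ℝ) T,
      a * u (0, t) - ε (0, t) * deriv (fun y => u (y, t)) 0 = 0)
    (hneumann : ∀ t ∈ Set.Icc (0:ℝ) T,
      ε (1, t) * deriv (fun y => u (y, t)) 1 = 0) :
    ∀ t ∈ Set.Icc (0:ℝ) T,
      (∫ x in (0:ℝ)..1, (u (x, t))^2)
        + 2 * ∫ τ in (0:ℝ)..t, (∫ x in (0:ℝ)..1, ε (x, τ) * (deriv (fun y => u (y, τ)) x)^2)
      ≤ ∫ x in (0:ℝ)..1, (u (x, 0))^2 :=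
  stmt1_general a T ha u ε s hs hsub hu hε hpde hrobin hneumann
end

section
/- Proposition 2 (discrete energy estimate for the SBP–SAT Galerkin scheme with penalties σ₀ = −1, σ_N = 1): suppose U : ℝ → ℝ^{N+1} is continuously differentiable and satisfies, for all t ≥ 0, P U′(t) + a Q U(t) = E B⁽ᴺ⁾ Dₓ U(t) − (√E Dₓ)ᵀ P (√E Dₓ) U(t) + SAT(t), where SAT(t) = −e₀·(a·U₀(t) − ε₀·(Dₓ U(t))₀) + e_N·(−ε_N·(Dₓ U(t))_N). Then for every t ≥ 0, U(t)ᵀ P U(t) + 2 ∫₀ᵗ (√E Dₓ U(s))ᵀ P (√E Dₓ U(s)) ds ≤ U(0)ᵀ P U(0). -/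
/-!
Energy method: multiply the scheme by `Uᵀ`; since `P` is symmetric, `Uᵀ P U' = ½ d/dt (Uᵀ P U)`.
The SBP property turns `a Uᵀ Q U` into the boundary term `a (U_N² - U₀²) / 2`, and the penalty
terms cancel the viscous boundary terms `Uᵀ E B Dₓ U` exactly, leaving only `-a U₀²`. Hence
`d/dt (Uᵀ P U) = -a (U₀² + U_N²) - 2 (√E Dₓ U)ᵀ P (√E Dₓ U)`, so for `a ≥ 0`
`Uᵀ P U + 2 ∫₀ᵗ (√E Dₓ U)ᵀ P (√E Dₓ U)` is nonincreasing.
-/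

open Matrix

def Bmat (n : ℕ) : Matrix (Fin (n+1)) (Fin (n+1)) ℝ :=
  Matrix.of fun i j =>
    if i = j ∧ i = Fin.last n then 1 else if i = j ∧ i = 0 then -1 else 0

section Calculus

variable {𝕜 : Type*} [NontriviallyNormedField 𝕜] {ι κ : Type*} [Fintype ι] {t : 𝕜}

theorem HasDerivAt.dotProduct {u v : 𝕜 → ι → 𝕜} {u' v' : ι → 𝕜}
    (hu : HasDerivAt u u' t) (hv : HasDerivAt v v' t) :
    HasDerivAt (fun s => u s ⬝ᵥ v s) (u' ⬝ᵥ v t + u t ⬝ᵥ v') t := by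
  have := HasDerivAt.fun_sum (u := Finset.univ) fun i _ =>
    (hasDerivAt_pi.1 hu i).fun_mul (hasDerivAt_pi.1 hv i)
  rw [Finset.sum_add_distrib] at this
  exact this

theorem HasDerivAt.matrix_mulVec (M : Matrix κ ι 𝕜) {v : 𝕜 → ι → 𝕜} {v' : ι → 𝕜}
    (hv : HasDerivAt v v' t) : HasDerivAt (fun s => M *ᵥ v s) (M *ᵥ v') t :=
  hasDerivAt_pi.2 fun i => by
    simpa [mulVec] using (hasDerivAt_const t (M i)).dotProduct hv

theorem HasDerivAt.dotProduct_mulVec_self {P : Matrix ι ι 𝕜} (hP : P.IsSymm)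
    {u : 𝕜 → ι → 𝕜} {u' : ι → 𝕜} (hu : HasDerivAt u u' t) :
    HasDerivAt (fun s => u s ⬝ᵥ P *ᵥ u s) (2 * (u t ⬝ᵥ P *ᵥ u')) t := by
  convert hu.dotProduct (hu.matrix_mulVec P) using 1
  rw [two_mul, ← hP.eq, dotProduct_transpose_mulVec, hP.eq]

end Calculus

theorem add_integral_le_of_hasDerivAt {V V' g : ℝ → ℝ} (hV : ∀ t, HasDerivAt V (V' t) t)
    (hg : Continuous g) (hle : ∀ t, 0 < t → V' t + g t ≤ 0) {t : ℝ} (ht : 0 ≤ t) :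
    V t + ∫ s in (0 : ℝ)..t, g s ≤ V 0 := by
  have hderiv : ∀ s, HasDerivAt (fun s => V s + ∫ r in (0 : ℝ)..s, g r) (V' s + g s) s :=
    fun s => (hV s).add <| intervalIntegral.integral_hasDerivAt_right
      (hg.intervalIntegrable _ _) (hg.stronglyMeasurableAtFilter _ _) hg.continuousAt
  have hanti := antitoneOn_of_hasDerivWithinAt_nonpos (convex_Ici (0 : ℝ))
    (fun s _ => (hderiv s).continuousAt.continuousWithinAt)
    (fun s _ => (hderiv s).hasDerivWithinAt)
    (fun s hs => hle s (by simpa using hs))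
  simpa using hanti Set.self_mem_Ici ht ht

theorem two_mul_dotProduct_mulVec_self {R : Type*} [CommSemiring R] {ι : Type*} [Fintype ι]
    (Q : Matrix ι ι R) (x : ι → R) : 2 * (x ⬝ᵥ Q *ᵥ x) = x ⬝ᵥ (Q + Qᵀ) *ᵥ x := by
  rw [add_mulVec, dotProduct_add, dotProduct_transpose_mulVec, two_mul]

theorem Bmat_eq_single_sub_single {n : ℕ} (hn : 1 ≤ n) :
    Bmat n = single (Fin.last n) (Fin.last n) 1 - single 0 0 1 := by
  have hn0 : n ≠ 0 := by omega
  ext i j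
  rcases eq_or_ne i j with rfl | hij
  · rcases eq_or_ne i (Fin.last n) with rfl | hi
    · simp [Bmat, hn0]
    · rcases eq_or_ne i 0 with rfl | hi0
      · simp [Bmat, hn0]
      · simp [Bmat, hi, hi0, Ne.symm hi, Ne.symm hi0]
  · have hne {k : Fin (n + 1)} : ¬(k = i ∧ k = j) := fun h => hij (h.1.symm.trans h.2)
    simp [Bmat, hij, hne]

theorem dotProduct_Bmat_mulVec {n : ℕ} (hn : 1 ≤ n) (x y : Fin (n+1) → ℝ) :
    x ⬝ᵥ Bmat n *ᵥ y = x (Fin.last n) * y (Fin.last n) - x 0 * y 0 := by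
  simp only [Bmat_eq_single_sub_single hn, sub_mulVec, single_mulVec_eq, dotProduct_sub,
    dotProduct_smul, dotProduct_single, smul_eq_mul]
  ring

theorem sbpSat_energy_rate {N : ℕ} (hN : 1 ≤ N) {a : ℝ}
    {P Q E S D : Matrix (Fin (N+1)) (Fin (N+1)) ℝ} {ε : Fin (N+1) → ℝ} (hSBP : Q + Qᵀ = Bmat N) (hE : E = diagonal ε) {u du : Fin (N+1) → ℝ}
    (h : P *ᵥ du + a • Q *ᵥ u
        = (E * Bmat N * D) *ᵥ u - ((S * D)ᵀ * P * (S * D)) *ᵥ u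
          + ((-(a * u 0 - ε 0 * (D *ᵥ u) 0)) • (Pi.single 0 1 : Fin (N+1) → ℝ)
             + (-(ε (Fin.last N) * (D *ᵥ u) (Fin.last N)))
                • (Pi.single (Fin.last N) 1 : Fin (N+1) → ℝ))) :
    u ⬝ᵥ P *ᵥ du
      = -(a / 2) * (u 0 ^ 2 + u (Fin.last N) ^ 2) - (S * D) *ᵥ u ⬝ᵥ P *ᵥ ((S * D) *ᵥ u) := by
  have hQ : 2 * (u ⬝ᵥ Q *ᵥ u) = u (Fin.last N) ^ 2 - u 0 ^ 2 := by
    rw [two_mul_dotProduct_mulVec_self, hSBP, dotProduct_Bmat_mulVec hN]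
    ring
  have hEB : u ⬝ᵥ (E * Bmat N * D) *ᵥ u
      = u (Fin.last N) * ε (Fin.last N) * (D *ᵥ u) (Fin.last N) - u 0 * ε 0 * (D *ᵥ u) 0 := by
    rw [← mulVec_mulVec, ← mulVec_mulVec, hE, dotProduct_mulVec, dotProduct_Bmat_mulVec hN,
      vecMul_diagonal, vecMul_diagonal]
  have hdiss : u ⬝ᵥ ((S * D)ᵀ * P * (S * D)) *ᵥ u = (S * D) *ᵥ u ⬝ᵥ P *ᵥ ((S * D) *ᵥ u) := by
    rw [← mulVec_mulVec, ← mulVec_mulVec, dotProduct_mulVec, vecMul_transpose]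
  have h' := congrArg (u ⬝ᵥ ·) h
  simp only [dotProduct_add, dotProduct_sub, dotProduct_smul, smul_eq_mul, dotProduct_single,
    mul_one, hEB, hdiss] at h'
  linear_combination h' - (a / 2) * hQ

theorem stmt5_general (N : ℕ) (hN : 1 ≤ N) (a : ℝ) (ha : 0 ≤ a)
    (P Q : Matrix (Fin (N+1)) (Fin (N+1)) ℝ)
    (hP : P.PosDef) (hSBP : Q + Qᵀ = Bmat N)
    (ε : Fin (N+1) → ℝ)
    (E sqrtE Dx : Matrix (Fin (N+1)) (Fin (N+1)) ℝ)
    (hE : E = Matrix.diagonal ε)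
    (U : ℝ → Fin (N+1) → ℝ) (hU : ContDiff ℝ 1 U)
    (hode : ∀ t : ℝ, 0 ≤ t →
      P.mulVec (deriv U t) + a • Q.mulVec (U t)
        = (E * Bmat N * Dx).mulVec (U t)
          - ((sqrtE * Dx)ᵀ * P * (sqrtE * Dx)).mulVec (U t)
          + ((-(a * U t 0 - ε 0 * Dx.mulVec (U t) 0)) • (Pi.single 0 1 : Fin (N+1) → ℝ)
             + (-(ε (Fin.last N) * Dx.mulVec (U t) (Fin.last N)))
                • (Pi.single (Fin.last N) 1 : Fin (N+1) → ℝ))) :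
    ∀ t : ℝ, 0 ≤ t →
      U t ⬝ᵥ P.mulVec (U t)
        + 2 * ∫ s in (0:ℝ)..t,
            (sqrtE * Dx).mulVec (U s) ⬝ᵥ P.mulVec ((sqrtE * Dx).mulVec (U s))
      ≤ U 0 ⬝ᵥ P.mulVec (U 0) := by
  intro t ht
  have hU' : Differentiable ℝ U := hU.differentiable one_ne_zero
  have hUc : Continuous U := hU'.continuous
  have key := add_integral_le_of_hasDerivAt
    (fun s => (hU' s).hasDerivAt.dotProduct_mulVec_self (isHermitian_iff_isSymm.mp hP.1))
    (g := fun s => 2 * ((sqrtE * Dx) *ᵥ U s ⬝ᵥ P *ᵥ ((sqrtE * Dx) *ᵥ U s))) (by fun_prop)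
    (fun s hs => by
      rw [sbpSat_energy_rate hN hSBP hE (hode s hs.le)]
      linarith [mul_nonneg ha (add_nonneg (sq_nonneg (U s 0)) (sq_nonneg (U s (Fin.last N))))])
    ht
  rwa [intervalIntegral.integral_const_mul] at key

/-- **Proposition 2.** Discrete energy estimate for the SBP–SAT Galerkin scheme
with penalties `σ₀ = −1`, `σ_N = 1`: if `P U′ + a Q U = E B Dₓ U − (√E Dₓ)ᵀ P (√E Dₓ) U + SAT`
with `SAT = −e₀ (a U₀ − ε₀ (Dₓ U)₀) + e_N (−ε_N (Dₓ U)_N)`, then for all `t ≥ 0`,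
`U(t)ᵀ P U(t) + 2 ∫₀ᵗ (√E Dₓ U)ᵀ P (√E Dₓ U) ds ≤ U(0)ᵀ P U(0)`. -/
theorem stmt5 (N : ℕ) (hN : 1 ≤ N) (a : ℝ) (ha : 0 ≤ a)
    (P Q : Matrix (Fin (N+1)) (Fin (N+1)) ℝ)
    (hP : P.PosDef) (hSBP : Q + Qᵀ = Bmat N)
    (ε : Fin (N+1) → ℝ) (hε : ∀ i, 0 ≤ ε i)
    (E sqrtE Dx : Matrix (Fin (N+1)) (Fin (N+1)) ℝ)
    (hE : E = Matrix.diagonal ε)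
    (hsqrtE : sqrtE = Matrix.diagonal fun i => Real.sqrt (ε i))
    (hDx : Dx = P⁻¹ * Q)
    (U : ℝ → Fin (N+1) → ℝ) (hU : ContDiff ℝ 1 U)
    (hode : ∀ t : ℝ, 0 ≤ t →
      P.mulVec (deriv U t) + a • Q.mulVec (U t)
        = (E * Bmat N * Dx).mulVec (U t)
          - ((sqrtE * Dx)ᵀ * P * (sqrtE * Dx)).mulVec (U t)
          + ((-(a * U t 0 - ε 0 * Dx.mulVec (U t) 0)) • (Pi.single 0 1 : Fin (N+1) → ℝ)
             + (-(ε (Fin.last N) * Dx.mulVec (U t) (Fin.last N)))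
                • (Pi.single (Fin.last N) 1 : Fin (N+1) → ℝ))) :
    ∀ t : ℝ, 0 ≤ t →
      U t ⬝ᵥ P.mulVec (U t)
        + 2 * ∫ s in (0:ℝ)..t,
            (sqrtE * Dx).mulVec (U s) ⬝ᵥ P.mulVec ((sqrtE * Dx).mulVec (U s))
      ≤ U 0 ⬝ᵥ P.mulVec (U 0) :=
  stmt5_general N hN a ha P Q hP hSBP ε E sqrtE Dx hE U hU hode
end

section
/- Proposition 3 (merging preserves the SBP property): if Q^L and Q^R are (p+1)×(p+1) real matrices each satisfying the local SBP property Q^L + (Q^L)ᵀ = B⁽ᵖ⁾ and Q^R + (Q^R)ᵀ = B⁽ᵖ⁾, then the merged (2p+1)×(2p+1) matrix Q = Q^L ⊕ₘ Q^R satisfies the global SBP property Q + Qᵀ = B⁽²ᵖ⁾ (the +1 and −1 contributions at the shared interface node p cancel). -/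
open Matrix

/-- The merged `(2p+1)×(2p+1)` matrix `A = Aᴸ ⊕ₘ Aᴿ` built from two `(p+1)×(p+1)` element
matrices sharing the interface node `p`. -/
def merge {p : ℕ} (AL AR : Matrix (Fin (p+1)) (Fin (p+1)) ℝ) :
    Matrix (Fin (2*p+1)) (Fin (2*p+1)) ℝ :=
  Matrix.of fun i j =>
    (if h : (i : ℕ) ≤ p ∧ (j : ℕ) ≤ p then
        AL ⟨i, by omega⟩ ⟨j, by omega⟩ else 0)
    + (if h : p ≤ (i : ℕ) ∧ p ≤ (j : ℕ) then
        AR ⟨(i : ℕ) - p, by have := i.isLt; omega⟩ ⟨(j : ℕ) - p, by have := j.isLt; omega⟩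
      else 0)

/-! Merging is additive and commutes with transposition, so `Q + Qᵀ` is the merge of
`Qᴸ + Qᴸᵀ = B⁽ᵖ⁾` with `Qᴿ + Qᴿᵀ = B⁽ᵖ⁾`. In `B⁽ᵖ⁾ ⊕ₘ B⁽ᵖ⁾` the `+1` of the left block and the
`−1` of the right block meet at the interface node `p` and cancel, leaving `B⁽²ᵖ⁾`. -/

lemma Bmat_apply (n : ℕ) (i j : Fin (n+1)) :
    Bmat n i j = if (i : ℕ) = j ∧ (i : ℕ) = n then 1
      else if (i : ℕ) = j ∧ (i : ℕ) = 0 then -1 else 0 := by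
  simp [Bmat, Fin.ext_iff, Fin.last, -Fin.val_eq_zero_iff]

lemma merge_transpose {p : ℕ} (AL AR : Matrix (Fin (p+1)) (Fin (p+1)) ℝ) :
    (merge AL AR)ᵀ = merge ALᵀ ARᵀ := by
  ext i j
  simp only [merge, transpose_apply, of_apply, and_comm]

lemma merge_add {p : ℕ} (AL AR BL BR : Matrix (Fin (p+1)) (Fin (p+1)) ℝ) :
    merge (AL + BL) (AR + BR) = merge AL AR + merge BL BR := by
  ext i j
  simp only [merge, Matrix.add_apply, of_apply]
  split_ifs <;> ring

lemma merge_Bmat_self {p : ℕ} (hp : 1 ≤ p) : merge (Bmat p) (Bmat p) = Bmat (2 * p) := by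
  ext i j
  simp only [merge, of_apply, Bmat_apply]
  split_ifs <;> first | omega | norm_num

/-- **Proposition 3.** Merging preserves the SBP property: if
`Qᴸ + Qᴸᵀ = B⁽ᵖ⁾` and `Qᴿ + Qᴿᵀ = B⁽ᵖ⁾`, then the merged matrix `Q = Qᴸ ⊕ₘ Qᴿ`
satisfies `Q + Qᵀ = B⁽²ᵖ⁾`. -/
theorem stmt8 (p : ℕ) (hp : 1 ≤ p) (QL QR : Matrix (Fin (p+1)) (Fin (p+1)) ℝ)
    (hQL : QL + QLᵀ = Bmat p) (hQR : QR + QRᵀ = Bmat p) :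
    merge QL QR + (merge QL QR)ᵀ = Bmat (2*p) := by
  rw [merge_transpose, ← merge_add, hQL, hQR, merge_Bmat_self hp]
end

section
/- Proposition 5 (positive semidefiniteness of the quadratic-element artificial dissipation operator): if ε̄₁ ≥ 0 and ε̄₂ ≥ −ε̄₁/3, then the matrix D(ε̄₁, ε̄₂) is positive semidefinite, i.e. vᵀ D(ε̄₁, ε̄₂) v ≥ 0 for all v ∈ ℝ³. -/
open Matrix

/-- The quadratic-element artificial dissipation matrix `D(ε̄₁, ε̄₂)`. -/
noncomputable def Dquad (e1 e2 : ℝ) : Matrix (Fin 3) (Fin 3) ℝ :=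
  (1/6 : ℝ) • !![7*e1 + 12*e2, -8*e1 - 24*e2, e1 + 12*e2;
                 -8*e1 - 24*e2, 16*e1 + 48*e2, -8*e1 - 24*e2;
                 e1 + 12*e2, -8*e1 - 24*e2, 7*e1 + 12*e2]

/-- **Proposition 5.** If `ε̄₁ ≥ 0` and `ε̄₂ ≥ −ε̄₁/3`, then the
quadratic-element artificial dissipation matrix `D(ε̄₁, ε̄₂)` is positive semidefinite:
`vᵀ D(ε̄₁, ε̄₂) v ≥ 0` for all `v ∈ ℝ³`. -/
theorem stmt11 (e1 e2 : ℝ) (h1 : 0 ≤ e1) (h2 : -e1/3 ≤ e2) :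
    ∀ v : Fin 3 → ℝ, 0 ≤ v ⬝ᵥ (Dquad e1 e2).mulVec v := by
  intro v
  simp [Dquad, dotProduct, mulVec, Fin.sum_univ_three, Matrix.cons_val_zero,
    Matrix.cons_val_one, Matrix.head_cons]
  nlinarith [sq_nonneg (v 0 - v 2), sq_nonneg (v 0 + v 2 - 2 * v 1),
    mul_nonneg h1 (sq_nonneg (v 0 - v 2)),
    mul_nonneg (by linarith : (0:ℝ) ≤ e1 + 3 * e2) (sq_nonneg (v 0 + v 2 - 2 * v 1))]
end

section
/- Simultaneous congruence diagonalization of the quadratic-element dissipation operator: there exists a single 3×3 real orthogonal matrix R (independent of ε̄₁ and ε̄₂, with Rᵀ R = I) such that for all real ε̄₁, ε̄₂, Rᵀ · D(ε̄₁, ε̄₂) · R = diag(0, ε̄₁, 4ε̄₁ + 12ε̄₂); in particular the eigenvalues of D(ε̄₁, ε̄₂) are 0, ε̄₁ and 4ε̄₁ + 12ε̄₂. -/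
open Matrix

/-- Simultaneous congruence diagonalization of the quadratic-element
dissipation operator: there is a single orthogonal matrix `R` (independent of `ε̄₁, ε̄₂`,
with `Rᵀ R = I`) such that `Rᵀ D(ε̄₁, ε̄₂) R = diag(0, ε̄₁, 4ε̄₁ + 12ε̄₂)` for all real
`ε̄₁, ε̄₂`. -/
theorem stmt12 :
    ∃ R : Matrix (Fin 3) (Fin 3) ℝ, Rᵀ * R = 1 ∧
      ∀ e1 e2 : ℝ, Rᵀ * Dquad e1 e2 * R = Matrix.diagonal ![0, e1, 4*e1 + 12*e2] := by
  set a : ℝ := (Real.sqrt 3)⁻¹ with ha'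
  set b : ℝ := (Real.sqrt 2)⁻¹ with hb'
  set c : ℝ := (Real.sqrt 6)⁻¹ with hc'
  have ha : a^2 = 3⁻¹ := by
    rw [ha', ← Real.sqrt_inv]; exact Real.sq_sqrt (by norm_num)
  have hb : b^2 = 2⁻¹ := by
    rw [hb', ← Real.sqrt_inv]; exact Real.sq_sqrt (by norm_num)
  have hc : c^2 = 6⁻¹ := by
    rw [hc', ← Real.sqrt_inv]; exact Real.sq_sqrt (by norm_num)
  refine ⟨!![a, b, c; a, 0, -2*c; a, -b, c], ?_, ?_⟩
  · ext i j
    fin_cases i <;> fin_cases j <;>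
      simp [Matrix.mul_apply, Fin.sum_univ_succ, Matrix.one_apply] <;>
      ring_nf <;> simp [ha, hb, hc] <;> ring_nf <;> norm_num
  · intro e1 e2
    ext i j
    fin_cases i <;> fin_cases j <;>
      simp [Matrix.mul_apply, Fin.sum_univ_succ, Dquad, Matrix.diagonal] <;>
      ring_nf <;> simp [ha, hb, hc] <;> ring_nf
end

section
/- Proposition 6 (nonnegativity of the cubic-element dissipation eigenvalues): suppose ε̄₁ ≥ 0, ε̄₂ ≥ −ε̄₁/3 and ε̄₃ ≥ −ε̄₁/45 − ε̄₂/3. Set F = 17ε̄₁ + 225ε̄₂ + 675ε̄₃ and G = 100·ε̄₁·(ε̄₁ + 15ε̄₂ + 45ε̄₃). Then: (i) (50/3)·ε̄₁ + 50·ε̄₂ ≥ 0; (ii) G ≥ 0; (iii) F ≥ 0; (iv) F² ≥ G; and consequently both F + √(F² − G) ≥ 0 and F − √(F² − G) ≥ 0, so all four quantities 0, (50/3)ε̄₁ + 50ε̄₂, F + √(F² − G) and F − √(F² − G) are nonnegative real numbers. -/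
/-- **Proposition 6.** Nonnegativity of the cubic-element dissipation
eigenvalues: if `ε̄₁ ≥ 0`, `ε̄₂ ≥ −ε̄₁/3` and `ε̄₃ ≥ −ε̄₁/45 − ε̄₂/3`, then with
`F = 17ε̄₁ + 225ε̄₂ + 675ε̄₃` and `G = 100 ε̄₁ (ε̄₁ + 15ε̄₂ + 45ε̄₃)` one has
`(50/3)ε̄₁ + 50ε̄₂ ≥ 0`, `G ≥ 0`, `F ≥ 0`, `F² ≥ G`, and consequently
`F + √(F² − G) ≥ 0` and `F − √(F² − G) ≥ 0`. -/
theorem stmt13 (e1 e2 e3 : ℝ) (h1 : 0 ≤ e1) (h2 : -e1/3 ≤ e2) (h3 : -e1/45 - e2/3 ≤ e3) :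
    (0 ≤ (50/3) * e1 + 50 * e2)
    ∧ (0 ≤ 100 * e1 * (e1 + 15*e2 + 45*e3))
    ∧ (0 ≤ 17*e1 + 225*e2 + 675*e3)
    ∧ (100 * e1 * (e1 + 15*e2 + 45*e3) ≤ (17*e1 + 225*e2 + 675*e3)^2)
    ∧ (0 ≤ (17*e1 + 225*e2 + 675*e3)
        + Real.sqrt ((17*e1 + 225*e2 + 675*e3)^2 - 100 * e1 * (e1 + 15*e2 + 45*e3)))
    ∧ (0 ≤ (17*e1 + 225*e2 + 675*e3)
        - Real.sqrt ((17*e1 + 225*e2 + 675*e3)^2 - 100 * e1 * (e1 + 15*e2 + 45*e3))) := by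
  have hb : 0 ≤ e1 + 15*e2 + 45*e3 := by linarith
  have hF : 0 ≤ 17*e1 + 225*e2 + 675*e3 := by linarith
  have hG : 0 ≤ 100 * e1 * (e1 + 15*e2 + 45*e3) := by positivity
  have hFG : 100 * e1 * (e1 + 15*e2 + 45*e3) ≤ (17*e1 + 225*e2 + 675*e3)^2 := by
    nlinarith [sq_nonneg (2*e1 - 10*(e1 + 15*e2 + 45*e3)), sq_nonneg (e1 + 15*e2 + 45*e3)]
  have hs : Real.sqrt ((17*e1 + 225*e2 + 675*e3)^2 - 100 * e1 * (e1 + 15*e2 + 45*e3))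
      ≤ 17*e1 + 225*e2 + 675*e3 := by
    have := Real.sqrt_le_sqrt (by linarith :
      (17*e1 + 225*e2 + 675*e3)^2 - 100 * e1 * (e1 + 15*e2 + 45*e3)
        ≤ (17*e1 + 225*e2 + 675*e3)^2)
    rwa [Real.sqrt_sq hF] at this
  have hsn : 0 ≤ Real.sqrt ((17*e1 + 225*e2 + 675*e3)^2 - 100 * e1 * (e1 + 15*e2 + 45*e3)) :=
    Real.sqrt_nonneg _
  exact ⟨by linarith, hG, hF, hFG, by linarith, by linarith⟩
end
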